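/- arXiv:2005.12846 — 7 statements merged into one kernel-verified Lean document; each statement's English description precedes it below -/
import Mathlib

section
/- Let X be a nonempty set, C a nonempty family of subsets of X, and Δ : C → P(X) a map with C ⊆ Δ(C) for every C ∈ C. Suppose there exist a bounded set function γ : C → [0,∞) and a constant λ > 1 such that whenever C₁, C₂ ∈ C, C₁ ∩ C₂ ≠ ∅ and γ(C₁) ≤ λ·γ(C₂), then C₁ ⊆ Δ(C₂). Then there exists a subfamily D ⊆ C whose members are pairwise disjoint and such that ⋃_{C ∈ C} C ⊆ ⋃_{D ∈ D} Δ(D). -/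
open Set

theorem abstract_vitali_first_form_V1_general {X : Type*}
    (𝒞 : Set (Set X))
    (Δ : Set X → Set X)
    (γ : Set X → ℝ) (hγ0 : ∀ C ∈ 𝒞, 0 ≤ γ C) (hbdd : BddAbove (γ '' 𝒞))
    (lam : ℝ) (hlam : 1 < lam)
    (hV1 : ∀ C₁ ∈ 𝒞, ∀ C₂ ∈ 𝒞, (C₁ ∩ C₂).Nonempty → γ C₁ ≤ lam * γ C₂ → C₁ ⊆ Δ C₂) :
    ∃ 𝒟 ⊆ 𝒞, 𝒟.Pairwise Disjoint ∧ ⋃₀ 𝒞 ⊆ ⋃ D ∈ 𝒟, Δ D := by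
  obtain ⟨R, hR⟩ := hbdd
  -- Vitali selection: each nonempty `C ∈ 𝒞` meets some `D ∈ 𝒟` with `γ C ≤ lam * γ D`.
  obtain ⟨𝒟, h𝒟, h𝒟_disj, h𝒟_dom⟩ :=
    Vitali.exists_disjoint_subfamily_covering_enlargement id {C ∈ 𝒞 | C.Nonempty} γ lam hlam
      (fun C hC => hγ0 C hC.1) R (fun C hC => hR ⟨C, hC.1, rfl⟩) (fun C hC => hC.2)
  refine ⟨𝒟, fun D hD => (h𝒟 hD).1, h𝒟_disj, ?_⟩
  rintro x ⟨C, hC, hxC⟩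
  obtain ⟨D, hD, hCD, hγCD⟩ := h𝒟_dom C ⟨hC, x, hxC⟩
  exact mem_biUnion hD (hV1 C hC D (h𝒟 hD).1 hCD hγCD hxC)

theorem abstract_vitali_first_form_V1 {X : Type*} [Nonempty X]
    (𝒞 : Set (Set X)) (h𝒞 : 𝒞.Nonempty)
    (Δ : Set X → Set X) (hΔ : ∀ C ∈ 𝒞, C ⊆ Δ C)
    (γ : Set X → ℝ) (hγ0 : ∀ C ∈ 𝒞, 0 ≤ γ C) (hbdd : BddAbove (γ '' 𝒞))
    (lam : ℝ) (hlam : 1 < lam)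
    (hV1 : ∀ C₁ ∈ 𝒞, ∀ C₂ ∈ 𝒞, (C₁ ∩ C₂).Nonempty → γ C₁ ≤ lam * γ C₂ → C₁ ⊆ Δ C₂) :
    ∃ 𝒟 ⊆ 𝒞, 𝒟.Pairwise Disjoint ∧ ⋃₀ 𝒞 ⊆ ⋃ D ∈ 𝒟, Δ D :=
  abstract_vitali_first_form_V1_general 𝒞 Δ γ hγ0 hbdd lam hlam hV1
end

section
/- Let X be a nonempty set, C a nonempty family of subsets of X, and Δ : C → P(X) a map with C ⊆ Δ(C) for every C ∈ C. Suppose there exists a bounded set function γ : C → [0,∞) such that for every subfamily G ⊆ C the supremum of {γ(C) : C ∈ G} is attained, and such that whenever C₁, C₂ ∈ C, C₁ ∩ C₂ ≠ ∅ and γ(C₁) ≤ γ(C₂), then C₁ ⊆ Δ(C₂). Then there exists a pairwise disjoint subfamily D ⊆ C with ⋃_{C ∈ C} C ⊆ ⋃_{D ∈ D} Δ(D). -/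
/-!
Call a pairwise disjoint subfamily `𝒟 ⊆ 𝒞` a Vitali subfamily if every member of `𝒞` that meets
`⋃₀ 𝒟` meets some `D ∈ 𝒟` with `γ C ≤ γ D`. Unions of chains of Vitali subfamilies are Vitali, so
Zorn's lemma yields a maximal one. If some nonempty `C ∈ 𝒞` missed every member of a maximal `𝒟`,
a `γ`-greatest nonempty member of `𝒞` disjoint from all of `𝒟` could be added to `𝒟`. Hence every
nonempty `C ∈ 𝒞` meets some `D ∈ 𝒟` with `γ C ≤ γ D`, and (V2) gives `C ⊆ Δ D`.
-/

open Set

structure IsVitaliSubfamily {X β : Type*} [LE β] (γ : Set X → β) (𝒞 𝒟 : Set (Set X)) : Prop where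
  subset : 𝒟 ⊆ 𝒞
  pairwise_disjoint : 𝒟.Pairwise Disjoint
  dominated : ∀ C ∈ 𝒞, (∃ D ∈ 𝒟, (C ∩ D).Nonempty) → ∃ D ∈ 𝒟, (C ∩ D).Nonempty ∧ γ C ≤ γ D

namespace IsVitaliSubfamily

variable {X β : Type*} [LE β] {γ : Set X → β} {𝒞 𝒟 : Set (Set X)}

theorem sUnion_of_isChain {c : Set (Set (Set X))} (hc : ∀ 𝒟 ∈ c, IsVitaliSubfamily γ 𝒞 𝒟)
    (hchain : IsChain (· ⊆ ·) c) : IsVitaliSubfamily γ 𝒞 (⋃₀ c) where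
  subset := sUnion_subset fun 𝒟 h𝒟 => (hc 𝒟 h𝒟).subset
  pairwise_disjoint :=
    (pairwise_sUnion hchain.directedOn).2 fun 𝒟 h𝒟 => (hc 𝒟 h𝒟).pairwise_disjoint
  dominated := by
    rintro C hC ⟨D, ⟨𝒟, h𝒟, hD⟩, hCD⟩
    obtain ⟨D', hD', h⟩ := (hc 𝒟 h𝒟).dominated C hC ⟨D, hD, hCD⟩
    exact ⟨D', ⟨𝒟, h𝒟, hD'⟩, h⟩

theorem exists_maximal (γ : Set X → β) (𝒞 : Set (Set X)) :
    ∃ 𝒟, Maximal (IsVitaliSubfamily γ 𝒞) 𝒟 :=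
  zorn_subset _ fun c hc hchain =>
    ⟨⋃₀ c, sUnion_of_isChain hc hchain, fun _ => subset_sUnion_of_mem⟩

theorem insert {M : Set X} (h𝒟 : IsVitaliSubfamily γ 𝒞 𝒟) (hM : M ∈ 𝒞)
    (hM𝒟 : ∀ D ∈ 𝒟, Disjoint M D)
    (hM_greatest : ∀ C ∈ 𝒞, (∀ D ∈ 𝒟, Disjoint C D) → (C ∩ M).Nonempty → γ C ≤ γ M) :
    IsVitaliSubfamily γ 𝒞 (insert M 𝒟) where
  subset := insert_subset hM h𝒟.subset
  pairwise_disjoint :=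
    h𝒟.pairwise_disjoint.insert fun D hD _ => ⟨hM𝒟 D hD, (hM𝒟 D hD).symm⟩
  dominated := by
    rintro C hC ⟨D, hD, hCD⟩
    by_cases hC𝒟 : ∀ D ∈ 𝒟, Disjoint C D
    · rcases hD with rfl | hD
      · exact ⟨D, mem_insert _ _, hCD, hM_greatest C hC hC𝒟 hCD⟩
      · exact absurd (hC𝒟 D hD) (not_disjoint_iff_nonempty_inter.2 hCD)
    · push Not at hC𝒟
      simp only [not_disjoint_iff_nonempty_inter] at hC𝒟
      obtain ⟨D', hD', h⟩ := h𝒟.dominated C hC hC𝒟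
      exact ⟨D', mem_insert_of_mem _ hD', h⟩

theorem exists_dominating_of_maximal (h𝒟 : Maximal (IsVitaliSubfamily γ 𝒞) 𝒟)
    (hmax : ∀ 𝒢 ⊆ 𝒞, 𝒢.Nonempty → ∃ C ∈ 𝒢, ∀ C' ∈ 𝒢, γ C' ≤ γ C)
    {C : Set X} (hC : C ∈ 𝒞) (hC_ne : C.Nonempty) :
    ∃ D ∈ 𝒟, (C ∩ D).Nonempty ∧ γ C ≤ γ D := by
  by_cases hmeets : ∃ D ∈ 𝒟, (C ∩ D).Nonempty
  · exact h𝒟.prop.dominated C hC hmeets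
  push Not at hmeets
  let 𝒢 : Set (Set X) := {C' ∈ 𝒞 | C'.Nonempty ∧ ∀ D ∈ 𝒟, Disjoint C' D}
  have hC𝒢 : C ∈ 𝒢 :=
    ⟨hC, hC_ne, fun D hD => disjoint_iff_inter_eq_empty.2 (hmeets D hD)⟩
  obtain ⟨M, ⟨hM, hM_ne, hM𝒟⟩, hM_greatest⟩ := hmax 𝒢 (fun _ h => h.1) ⟨C, hC𝒢⟩
  have hinsert : IsVitaliSubfamily γ 𝒞 (Set.insert M 𝒟) :=
    h𝒟.prop.insert hM hM𝒟 fun C' hC' hC'𝒟 hC'M =>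
      hM_greatest C' ⟨hC', hC'M.mono inter_subset_left, hC'𝒟⟩
  have hM_mem : M ∈ 𝒟 := h𝒟.eq_of_subset hinsert (subset_insert M 𝒟) ▸ mem_insert M 𝒟
  exact absurd (disjoint_self.1 (hM𝒟 M hM_mem)) hM_ne.ne_empty

end IsVitaliSubfamily

theorem abstract_vitali_first_form_V2_general {X : Type*}
    (𝒞 : Set (Set X))
    (Δ : Set X → Set X)
    (γ : Set X → ℝ)
    (hmax : ∀ 𝒢 ⊆ 𝒞, 𝒢.Nonempty → ∃ C ∈ 𝒢, ∀ C' ∈ 𝒢, γ C' ≤ γ C)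
    (hV2 : ∀ C₁ ∈ 𝒞, ∀ C₂ ∈ 𝒞, (C₁ ∩ C₂).Nonempty → γ C₁ ≤ γ C₂ → C₁ ⊆ Δ C₂) :
    ∃ 𝒟 ⊆ 𝒞, 𝒟.Pairwise Disjoint ∧ ⋃₀ 𝒞 ⊆ ⋃ D ∈ 𝒟, Δ D := by
  obtain ⟨𝒟, h𝒟⟩ := IsVitaliSubfamily.exists_maximal γ 𝒞
  refine ⟨𝒟, h𝒟.prop.subset, h𝒟.prop.pairwise_disjoint, ?_⟩
  rintro x ⟨C, hC, hxC⟩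
  obtain ⟨D, hD, hCD, hγ⟩ := IsVitaliSubfamily.exists_dominating_of_maximal h𝒟 hmax hC ⟨x, hxC⟩
  exact mem_biUnion hD (hV2 C hC D (h𝒟.prop.subset hD) hCD hγ hxC)

theorem abstract_vitali_first_form_V2 {X : Type*} [Nonempty X]
    (𝒞 : Set (Set X)) (h𝒞 : 𝒞.Nonempty)
    (Δ : Set X → Set X) (hΔ : ∀ C ∈ 𝒞, C ⊆ Δ C)
    (γ : Set X → ℝ) (hγ0 : ∀ C ∈ 𝒞, 0 ≤ γ C) (hbdd : BddAbove (γ '' 𝒞))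
    (hmax : ∀ 𝒢 ⊆ 𝒞, 𝒢.Nonempty → ∃ C ∈ 𝒢, ∀ C' ∈ 𝒢, γ C' ≤ γ C)
    (hV2 : ∀ C₁ ∈ 𝒞, ∀ C₂ ∈ 𝒞, (C₁ ∩ C₂).Nonempty → γ C₁ ≤ γ C₂ → C₁ ⊆ Δ C₂) :
    ∃ 𝒟 ⊆ 𝒞, 𝒟.Pairwise Disjoint ∧ ⋃₀ 𝒞 ⊆ ⋃ D ∈ 𝒟, Δ D :=
  abstract_vitali_first_form_V2_general 𝒞 Δ γ hmax hV2
end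

section
/- Let X be a set, A ⊆ P(X) a union-closed family of subsets of X, and γ : A → [0,∞] monotone (A ⊆ A' implies γ(A) ≤ γ(A')). Let B ⊆ A satisfy: for every sequence (Bₙ) of pairwise disjoint members of B with infₙ γ(Bₙ) > 0 one has γ(⋃ₙ Bₙ) = ∞. Let C ⊆ B with sup_{C∈C} γ(C) < ∞ and γ(C) ≠ 0 for all C ∈ C, and let λ > 1. Then there is a countable sequence (Cₙ) of pairwise disjoint members of C such that: if γ(⋃_{C∈C} C) < ∞ then ⋃_{C∈C} C ⊆ ⋃ₙ Δ(Cₙ), and if γ(⋃_{C∈C} C) = ∞ then either infₙ γ(Cₙ) > 0 or ⋃_{C∈C} C ⊆ ⋃ₙ Δ(Cₙ), where Δ(C) := ⋃ {G ∈ C : G ∩ C ≠ ∅ and γ(G) ≤ λ·γ(C)}. -/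
/-!
Greedy selection: from the members of `𝒞` still disjoint from everything chosen so far, pick one
whose gauge is at least a `1/λ`-fraction of the supremum of the gauges of the remaining ones
(possible since that supremum is finite and `λ > 1`). A member `C` of `𝒞` that is eventually
discarded meets the set `D` chosen at that stage while `γ C ≤ λ γ D`, so `C ⊆ Δ(D)`. A member that
is never discarded bounds all chosen gauges from below by `γ C / λ > 0`; the chosen sets then form
a disjoint sequence in `ℬ` with positive infimum, which forces `γ (⋃₀ 𝒞) = ∞`. The dilation factor
is first lowered to `min λ 2`: for `λ = ∞` the bound `γ C / λ` would be `0`.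
-/

open Set ENNReal

/-- The dilating map `Δ^λ_{γ,𝒞}` of the second abstract Vitali covering lemma. -/
noncomputable def dilate {X : Type*} (𝒞 : Set (Set X)) (γ : Set X → ℝ≥0∞) (lam : ℝ≥0∞)
    (C : Set X) : Set X :=
  ⋃₀ {G | G ∈ 𝒞 ∧ (G ∩ C).Nonempty ∧ γ G ≤ lam * γ C}

lemma dilate_mono {X : Type*} {𝒞 : Set (Set X)} {γ : Set X → ℝ≥0∞} {lam lam' : ℝ≥0∞}
    (h : lam ≤ lam') (C : Set X) : dilate 𝒞 γ lam C ⊆ dilate 𝒞 γ lam' C :=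
  sUnion_mono fun _ ⟨hG, hGC, hγ⟩ => ⟨hG, hGC, hγ.trans (mul_le_mul_left h _)⟩

lemma exists_biSup_le_mul {ι : Type*} {S : Set ι} (hS : S.Nonempty) (f : ι → ℝ≥0∞)
    (hfin : (⨆ i ∈ S, f i) ≠ ∞) {lam : ℝ≥0∞} (hlam : 1 < lam) :
    ∃ i ∈ S, (⨆ j ∈ S, f j) ≤ lam * f i := by
  set s := ⨆ j ∈ S, f j
  rcases eq_or_ne s 0 with hs | hs
  · obtain ⟨i, hi⟩ := hS
    exact ⟨i, hi, hs ▸ zero_le⟩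
  have hlt : s / lam < s := by
    refine div_lt_of_lt_mul' ?_
    simpa using ENNReal.mul_lt_mul_left hs hfin hlam
  obtain ⟨i, hi, hlt⟩ := lt_biSup_iff.mp hlt
  have hfi : f i ≠ 0 := (lt_of_le_of_lt zero_le hlt).ne'
  refine ⟨i, hi, ?_⟩
  rw [mul_comm, ← ENNReal.div_le_iff_le_mul (Or.inl (zero_lt_one.trans hlam).ne') (Or.inr hfi)]
  exact hlt.le

lemma gauge_sUnion_eq_top_of_pairwise_disjoint {X : Type*} {𝒜 ℬ 𝒞 : Set (Set X)}
    {γ : Set X → ℝ≥0∞} (h𝒜 : ∀ 𝒮 ⊆ 𝒜, ⋃₀ 𝒮 ∈ 𝒜)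
    (hmono : ∀ A ∈ 𝒜, ∀ A' ∈ 𝒜, A ⊆ A' → γ A ≤ γ A') (hℬ : ℬ ⊆ 𝒜)
    (hV4 : ∀ B : ℕ → Set X, (∀ n, B n ∈ ℬ) → Pairwise (Function.onFun Disjoint B) →
      0 < ⨅ n, γ (B n) → γ (⋃ n, B n) = ∞)
    (h𝒞ℬ : 𝒞 ⊆ ℬ) {B : ℕ → Set X} (hB : ∀ n, B n ∈ 𝒞)
    (hdisj : Pairwise (Function.onFun Disjoint B)) (hpos : 0 < ⨅ n, γ (B n)) :
    γ (⋃₀ 𝒞) = ∞ := by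
  have hB𝒜 : ⋃ n, B n ∈ 𝒜 :=
    sUnion_range B ▸ h𝒜 _ (range_subset_iff.mpr fun n => hℬ (h𝒞ℬ (hB n)))
  have h𝒞𝒜 : ⋃₀ 𝒞 ∈ 𝒜 := h𝒜 𝒞 (h𝒞ℬ.trans hℬ)
  refine top_le_iff.mp ?_
  calc ∞ = γ (⋃ n, B n) := (hV4 B (fun n => h𝒞ℬ (hB n)) hdisj hpos).symm
    _ ≤ γ (⋃₀ 𝒞) := hmono _ hB𝒜 _ h𝒞𝒜 (iUnion_subset fun n => subset_sUnion_of_mem (hB n))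

namespace AbstractVitali

variable {X : Type*} (γ : Set X → ℝ≥0∞) (lam : ℝ≥0∞) (𝒞 : Set (Set X))

-- The fallback `∅` is junk: it is taken only once no candidates remain, so only the stages with
-- `(remaining γ lam 𝒞 n).Nonempty` contribute to the selected family.
open Classical in
noncomputable def pick (S : Set (Set X)) : Set X :=
  if h : ∃ G ∈ S, (⨆ G' ∈ S, γ G') ≤ lam * γ G then h.choose else ∅

noncomputable def remaining : ℕ → Set (Set X)
  | 0 => 𝒞
  | n + 1 => {C | C ∈ remaining n ∧ Disjoint C (pick γ lam (remaining n))}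

noncomputable def selected (n : ℕ) : Set X :=
  pick γ lam (remaining γ lam 𝒞 n)

variable {γ lam 𝒞}

lemma mem_remaining_iff {n : ℕ} {C : Set X} :
    C ∈ remaining γ lam 𝒞 n ↔ C ∈ 𝒞 ∧ ∀ k < n, Disjoint C (selected γ lam 𝒞 k) := by
  induction n with
  | zero => simp [remaining]
  | succ n ih =>
    rw [Nat.forall_lt_succ_right, ← and_assoc, ← ih]
    rfl

lemma remaining_subset (n : ℕ) : remaining γ lam 𝒞 n ⊆ 𝒞 :=
  fun _ hC => (mem_remaining_iff.mp hC).1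

section

variable (hfin : (⨆ C ∈ 𝒞, γ C) ≠ ∞) (hlam : 1 < lam)
include hfin hlam

lemma selected_spec {n : ℕ} (hn : (remaining γ lam 𝒞 n).Nonempty) :
    selected γ lam 𝒞 n ∈ remaining γ lam 𝒞 n ∧
      (⨆ G ∈ remaining γ lam 𝒞 n, γ G) ≤ lam * γ (selected γ lam 𝒞 n) := by
  have hfin' : (⨆ G ∈ remaining γ lam 𝒞 n, γ G) ≠ ∞ :=
    ne_top_of_le_ne_top hfin (biSup_mono fun _ hG => remaining_subset n hG)
  have hex := exists_biSup_le_mul hn γ hfin' hlam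
  rw [selected, pick, dif_pos hex]
  exact hex.choose_spec

lemma selected_mem {n : ℕ} (hn : (remaining γ lam 𝒞 n).Nonempty) : selected γ lam 𝒞 n ∈ 𝒞 :=
  remaining_subset n (selected_spec hfin hlam hn).1

lemma le_mul_selected {n : ℕ} {C : Set X} (hC : C ∈ remaining γ lam 𝒞 n) :
    γ C ≤ lam * γ (selected γ lam 𝒞 n) :=
  (le_biSup γ hC).trans (selected_spec hfin hlam ⟨C, hC⟩).2

lemma disjoint_selected {m n : ℕ} (hm : (remaining γ lam 𝒞 m).Nonempty)
    (hn : (remaining γ lam 𝒞 n).Nonempty) (hmn : m ≠ n) :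
    Disjoint (selected γ lam 𝒞 m) (selected γ lam 𝒞 n) := by
  rcases hmn.lt_or_gt with h | h
  · exact ((mem_remaining_iff.mp (selected_spec hfin hlam hn).1).2 m h).symm
  · exact (mem_remaining_iff.mp (selected_spec hfin hlam hm).1).2 n h

lemma subset_dilate_selected {n : ℕ} {C : Set X} (hC : C ∈ remaining γ lam 𝒞 n)
    (hCn : ¬Disjoint C (selected γ lam 𝒞 n)) :
    C ⊆ dilate 𝒞 γ lam (selected γ lam 𝒞 n) :=
  subset_sUnion_of_mem ⟨remaining_subset n hC, not_disjoint_iff_nonempty_inter.mp hCn,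
    le_mul_selected hfin hlam hC⟩

lemma exists_subset_dilate_or_forall_mem_remaining {C : Set X} (hC : C ∈ 𝒞) :
    (∃ n, (remaining γ lam 𝒞 n).Nonempty ∧ C ⊆ dilate 𝒞 γ lam (selected γ lam 𝒞 n)) ∨
      ∀ n, C ∈ remaining γ lam 𝒞 n := by
  by_cases h : ∃ n, ¬Disjoint C (selected γ lam 𝒞 n)
  · left
    classical
    have hCn : C ∈ remaining γ lam 𝒞 (Nat.find h) :=
      mem_remaining_iff.mpr ⟨hC, fun k hk => not_not.mp (Nat.find_min h hk)⟩
    exact ⟨Nat.find h, ⟨C, hCn⟩, subset_dilate_selected hfin hlam hCn (Nat.find_spec h)⟩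
  · push Not at h
    exact Or.inr fun n => mem_remaining_iff.mpr ⟨hC, fun k _ => h k⟩

lemma sUnion_subset_iUnion_dilate_or_exists_forall_mem_remaining :
    ⋃₀ 𝒞 ⊆ ⋃ D ∈ selected γ lam 𝒞 '' {n | (remaining γ lam 𝒞 n).Nonempty}, dilate 𝒞 γ lam D ∨
      ∃ C ∈ 𝒞, ∀ n, C ∈ remaining γ lam 𝒞 n := by
  by_cases h : ∃ C ∈ 𝒞, ∀ n, C ∈ remaining γ lam 𝒞 n
  · exact Or.inr h
  refine Or.inl fun x ⟨C, hC, hx⟩ => ?_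
  obtain ⟨n, hn, hCD⟩ := (exists_subset_dilate_or_forall_mem_remaining hfin hlam hC).resolve_right
    fun hC' => h ⟨C, hC, hC'⟩
  exact mem_biUnion (mem_image_of_mem _ hn) (hCD hx)

lemma pairwise_disjoint_image_selected :
    (selected γ lam 𝒞 '' {n | (remaining γ lam 𝒞 n).Nonempty}).Pairwise Disjoint := by
  rintro _ ⟨m, hm, rfl⟩ _ ⟨n, hn, rfl⟩ hmn
  exact disjoint_selected hfin hlam hm hn (ne_of_apply_ne _ hmn)

variable {C : Set X} (hC : ∀ n, C ∈ remaining γ lam 𝒞 n)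
include hC

lemma pairwise_disjoint_selected_of_forall_mem_remaining :
    Pairwise (Function.onFun Disjoint (selected γ lam 𝒞)) :=
  fun _ _ hmn => disjoint_selected hfin hlam ⟨C, hC _⟩ ⟨C, hC _⟩ hmn

lemma div_le_iInf_selected_of_forall_mem_remaining :
    γ C / lam ≤ ⨅ n, γ (selected γ lam 𝒞 n) :=
  le_iInf fun n => div_le_of_le_mul' (le_mul_selected hfin hlam (hC n))

end

end AbstractVitali

open AbstractVitali in
theorem abstract_vitali_second_form {X : Type*}
    (𝒜 : Set (Set X)) (h𝒜 : ∀ 𝒮 ⊆ 𝒜, ⋃₀ 𝒮 ∈ 𝒜)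
    (γ : Set X → ℝ≥0∞)
    (hmono : ∀ A ∈ 𝒜, ∀ A' ∈ 𝒜, A ⊆ A' → γ A ≤ γ A')
    (ℬ : Set (Set X)) (hℬ : ℬ ⊆ 𝒜)
    (hV4 : ∀ B : ℕ → Set X, (∀ n, B n ∈ ℬ) → Pairwise (Function.onFun Disjoint B) →
      0 < ⨅ n, γ (B n) → γ (⋃ n, B n) = ∞)
    (𝒞 : Set (Set X)) (h𝒞ℬ : 𝒞 ⊆ ℬ)
    (hsup : (⨆ C ∈ 𝒞, γ C) < ∞) (hne : ∀ C ∈ 𝒞, γ C ≠ 0)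
    (lam : ℝ≥0∞) (hlam : 1 < lam) :
    ∃ 𝒟 ⊆ 𝒞, 𝒟.Countable ∧ 𝒟.Pairwise Disjoint ∧
      (γ (⋃₀ 𝒞) < ∞ → ⋃₀ 𝒞 ⊆ ⋃ C ∈ 𝒟, dilate 𝒞 γ lam C) ∧
      (γ (⋃₀ 𝒞) = ∞ →
        (0 < ⨅ C ∈ 𝒟, γ C) ∨ ⋃₀ 𝒞 ⊆ ⋃ C ∈ 𝒟, dilate 𝒞 γ lam C) := by
  set μ := min lam 2
  have hμ : 1 < μ := lt_min hlam one_lt_two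
  have hμtop : μ ≠ ∞ := ne_top_of_le_ne_top ofNat_ne_top (min_le_right _ _)
  have hfin := hsup.ne
  set 𝒟 := selected γ μ 𝒞 '' {n | (remaining γ μ 𝒞 n).Nonempty}
  have hdilate : ⋃₀ 𝒞 ⊆ ⋃ D ∈ 𝒟, dilate 𝒞 γ μ D → ⋃₀ 𝒞 ⊆ ⋃ D ∈ 𝒟, dilate 𝒞 γ lam D :=
    fun h => h.trans (iUnion₂_mono fun D _ => dilate_mono (min_le_left _ _) D)
  have hpos {C : Set X} (hC : C ∈ 𝒞) (hCr : ∀ n, C ∈ remaining γ μ 𝒞 n) :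
      0 < ⨅ n, γ (selected γ μ 𝒞 n) :=
    (ENNReal.div_pos (hne C hC) hμtop).trans_le
      (div_le_iInf_selected_of_forall_mem_remaining hfin hμ hCr)
  have hcover := sUnion_subset_iUnion_dilate_or_exists_forall_mem_remaining hfin hμ
  refine ⟨𝒟, image_subset_iff.mpr fun n hn => selected_mem hfin hμ hn,
    (to_countable _).image _, pairwise_disjoint_image_selected hfin hμ,
    fun hfinite => hdilate (hcover.resolve_right ?_), fun _ => hcover.symm.imp ?_ hdilate⟩
  · rintro ⟨C, hC, hCr⟩
    exact hfinite.ne <| gauge_sUnion_eq_top_of_pairwise_disjoint h𝒜 hmono hℬ hV4 h𝒞ℬ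
      (fun n => selected_mem hfin hμ ⟨C, hCr n⟩)
      (pairwise_disjoint_selected_of_forall_mem_remaining hfin hμ hCr) (hpos hC hCr)
  · rintro ⟨C, hC, hCr⟩
    exact (hpos hC hCr).trans_le (le_iInf₂ fun _ ⟨n, _, hD⟩ => hD ▸ iInf_le _ n)
end

section
/- Let F be a nonempty closed subset of ℝⁿ. Then there exists a family D of pairwise disjoint left-closed right-open (dyadic) cubes such that ℝⁿ \ F = ⋃_{Q ∈ D} Q and for every Q ∈ D one has √n·L_Q ≤ dist(Q, F) ≤ 4√n·L_Q, where L_Q is the side length of Q. -/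
open Set Metric

/-- The dyadic cube `2^ℓ m + 2^ℓ [0,1)ⁿ` in Euclidean space `ℝⁿ`. -/
def dyadicCubeE (n : ℕ) (ℓ : ℤ) (m : Fin n → ℤ) : Set (EuclideanSpace ℝ (Fin n)) :=
  {x | ∀ i, (2 : ℝ) ^ ℓ * m i ≤ x i ∧ x i < (2 : ℝ) ^ ℓ * (m i + 1)}

/-- Distance between two sets: `inf {dist x y : x ∈ A, y ∈ B}`. -/
noncomputable def setDist {α : Type*} [MetricSpace α] (A B : Set α) : ℝ :=
  sInf {d : ℝ | ∃ x ∈ A, ∃ y ∈ B, d = dist x y}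

/-!
Call the dyadic cube of side `2 ^ ℓ` containing `x` admissible when its distance to `F` is at
least `√n · 2 ^ ℓ`, a bound for its diameter. Admissibility passes to subcubes; a point
`x ∉ F` lies in admissible cubes of every side below `dist(x, F) / (2√n)` and in none of side
above `dist(x, F) / √n`, hence in a largest one. These maximal admissible cubes are the Whitney
cubes. Two dyadic cubes are nested or disjoint, and a Whitney cube strictly inside another
would have an admissible parent, so they are disjoint. The parent `P` of a Whitney cube `Q` is
not admissible, whence `dist(Q, F) ≤ dist(P, F) + √n · 2 ^ (ℓ + 1) < 4√n · 2 ^ ℓ`.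
-/

section SetDist

variable {α : Type*} [MetricSpace α] {A A' B : Set α} {x y : α}

lemma setDist_le_dist (hx : x ∈ A) (hy : y ∈ B) : setDist A B ≤ dist x y :=
  csInf_le ⟨0, by rintro _ ⟨_, -, _, -, rfl⟩; exact dist_nonneg⟩ ⟨x, hx, y, hy, rfl⟩

lemma le_setDist (hA : A.Nonempty) (hB : B.Nonempty) {c : ℝ}
    (h : ∀ x ∈ A, ∀ y ∈ B, c ≤ dist x y) : c ≤ setDist A B := by
  obtain ⟨x, hx⟩ := hA
  obtain ⟨y, hy⟩ := hB
  refine le_csInf ⟨_, x, hx, y, hy, rfl⟩ ?_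
  rintro _ ⟨a, ha, b, hb, rfl⟩
  exact h a ha b hb

lemma setDist_anti_left (h : A ⊆ A') (hA : A.Nonempty) (hB : B.Nonempty) :
    setDist A' B ≤ setDist A B :=
  le_setDist hA hB fun _ ha _ hb => setDist_le_dist (h ha) hb

lemma setDist_le_infDist (hx : x ∈ A) (hB : B.Nonempty) : setDist A B ≤ infDist x B :=
  (le_infDist hB).2 fun _ hy => setDist_le_dist hx hy

lemma infDist_sub_le_setDist (hA : A.Nonempty) (hB : B.Nonempty) {δ : ℝ}
    (h : ∀ y ∈ A, dist x y ≤ δ) : infDist x B - δ ≤ setDist A B :=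
  le_setDist hA hB fun y hy z hz => by
    linarith [infDist_le_dist_of_mem (x := x) hz, dist_triangle x y z, h y hy]

lemma disjoint_of_setDist_pos (h : 0 < setDist A B) : Disjoint A B :=
  disjoint_left.2 fun z hzA hzB => by
    linarith [setDist_le_dist hzA hzB, dist_self z]

end SetDist

lemma Int.floor_div_two_zpow_add (a : ℝ) (ℓ : ℤ) (k : ℕ) :
    ⌊a / 2 ^ (ℓ + k)⌋ = ⌊a / 2 ^ ℓ⌋ / 2 ^ k := by
  rw [zpow_add₀ two_ne_zero, zpow_natCast, ← div_div]
  exact_mod_cast Int.floor_div_natCast (a / 2 ^ ℓ) (2 ^ k)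

namespace Whitney

variable {n : ℕ} {ℓ ℓ' : ℤ} {m : Fin n → ℤ} {x y : EuclideanSpace ℝ (Fin n)}

lemma mem_dyadicCubeE_iff : x ∈ dyadicCubeE n ℓ m ↔ ∀ i, ⌊x i / 2 ^ ℓ⌋ = m i := by
  have h2 : (0 : ℝ) < 2 ^ ℓ := by positivity
  refine forall_congr' fun i => ?_
  rw [Int.floor_eq_iff, le_div_iff₀ h2, div_lt_iff₀ h2, mul_comm, mul_comm (_ + 1 : ℝ)]

lemma dist_le_of_mem_dyadicCubeE (hx : x ∈ dyadicCubeE n ℓ m) (hy : y ∈ dyadicCubeE n ℓ m) :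
    dist x y ≤ Real.sqrt n * 2 ^ ℓ := by
  have hcoord : dist (WithLp.ofLp x) (WithLp.ofLp y) ≤ 2 ^ ℓ :=
    (dist_pi_le_iff (by positivity)).2 fun i => by
      rw [Real.dist_eq, abs_le]
      constructor <;> linarith [hx i, hy i]
  calc dist x y ≤ (n : ℝ) ^ (1 / 2 : ℝ) * dist (WithLp.ofLp x) (WithLp.ofLp y) := by
        simpa using (PiLp.antilipschitzWith_ofLp 2 (fun _ : Fin n => ℝ)).le_mul_dist x y
    _ ≤ Real.sqrt n * 2 ^ ℓ := by rw [Real.sqrt_eq_rpow]; gcongr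

noncomputable def dyadicCubeAt (n : ℕ) (ℓ : ℤ) (x : EuclideanSpace ℝ (Fin n)) :
    Set (EuclideanSpace ℝ (Fin n)) :=
  dyadicCubeE n ℓ fun i => ⌊x i / 2 ^ ℓ⌋

lemma mem_dyadicCubeAt_iff : y ∈ dyadicCubeAt n ℓ x ↔ ∀ i, ⌊y i / 2 ^ ℓ⌋ = ⌊x i / 2 ^ ℓ⌋ :=
  mem_dyadicCubeE_iff

lemma mem_dyadicCubeAt_self (ℓ : ℤ) (x : EuclideanSpace ℝ (Fin n)) : x ∈ dyadicCubeAt n ℓ x :=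
  mem_dyadicCubeAt_iff.2 fun _ => rfl

lemma dyadicCubeAt_eq_of_mem (h : y ∈ dyadicCubeAt n ℓ x) :
    dyadicCubeAt n ℓ y = dyadicCubeAt n ℓ x :=
  congrArg (dyadicCubeE n ℓ) (funext (mem_dyadicCubeAt_iff.1 h))

lemma dyadicCubeAt_subset_of_le (h : ℓ ≤ ℓ') : dyadicCubeAt n ℓ x ⊆ dyadicCubeAt n ℓ' x := by
  obtain ⟨k, rfl⟩ : ∃ k : ℕ, ℓ' = ℓ + k := ⟨(ℓ' - ℓ).toNat, by omega⟩
  intro y hy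
  rw [mem_dyadicCubeAt_iff] at hy ⊢
  intro i
  rw [Int.floor_div_two_zpow_add, Int.floor_div_two_zpow_add, hy]

lemma disjoint_dyadicCubeAt_of_ne (h : dyadicCubeAt n ℓ x ≠ dyadicCubeAt n ℓ y) :
    Disjoint (dyadicCubeAt n ℓ x) (dyadicCubeAt n ℓ y) :=
  disjoint_left.2 fun _ hzx hzy =>
    h ((dyadicCubeAt_eq_of_mem hzx).symm.trans (dyadicCubeAt_eq_of_mem hzy))

lemma dist_le_of_mem_dyadicCubeAt (hy : y ∈ dyadicCubeAt n ℓ x) :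
    dist x y ≤ Real.sqrt n * 2 ^ ℓ :=
  dist_le_of_mem_dyadicCubeE (mem_dyadicCubeAt_self ℓ x) hy

variable {F : Set (EuclideanSpace ℝ (Fin n))}

def IsAdmissible (n : ℕ) (F : Set (EuclideanSpace ℝ (Fin n))) (ℓ : ℤ)
    (x : EuclideanSpace ℝ (Fin n)) : Prop :=
  Real.sqrt n * 2 ^ ℓ ≤ setDist (dyadicCubeAt n ℓ x) F

lemma isAdmissible_congr (hy : y ∈ dyadicCubeAt n ℓ x) :
    IsAdmissible n F ℓ y ↔ IsAdmissible n F ℓ x := by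
  rw [IsAdmissible, IsAdmissible, dyadicCubeAt_eq_of_mem hy]

lemma IsAdmissible.of_le (hF : F.Nonempty) (hle : ℓ ≤ ℓ') (h : IsAdmissible n F ℓ' x) :
    IsAdmissible n F ℓ x :=
  calc Real.sqrt n * 2 ^ ℓ ≤ Real.sqrt n * 2 ^ ℓ' := by gcongr; norm_num
    _ ≤ setDist (dyadicCubeAt n ℓ' x) F := h
    _ ≤ setDist (dyadicCubeAt n ℓ x) F :=
      setDist_anti_left (dyadicCubeAt_subset_of_le hle) ⟨x, mem_dyadicCubeAt_self ℓ x⟩ hF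

lemma IsAdmissible.le_infDist (hF : F.Nonempty) (h : IsAdmissible n F ℓ x) :
    Real.sqrt n * 2 ^ ℓ ≤ infDist x F :=
  h.trans (setDist_le_infDist (mem_dyadicCubeAt_self ℓ x) hF)

lemma isAdmissible_of_le_infDist (hF : F.Nonempty) (h : 2 * (Real.sqrt n * 2 ^ ℓ) ≤ infDist x F) :
    IsAdmissible n F ℓ x := by
  have := infDist_sub_le_setDist ⟨x, mem_dyadicCubeAt_self ℓ x⟩ hF
    fun _ hy => dist_le_of_mem_dyadicCubeAt (x := x) hy
  unfold IsAdmissible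
  linarith

lemma IsAdmissible.disjoint (hn : 0 < n) (h : IsAdmissible n F ℓ x) :
    Disjoint (dyadicCubeAt n ℓ x) F :=
  disjoint_of_setDist_pos (lt_of_lt_of_le (by positivity) h)

lemma setDist_le_of_not_isAdmissible_succ (hF : F.Nonempty) (h : ¬ IsAdmissible n F (ℓ + 1) x) :
    setDist (dyadicCubeAt n ℓ x) F ≤ 4 * Real.sqrt n * 2 ^ ℓ := by
  have hparent := infDist_sub_le_setDist ⟨x, mem_dyadicCubeAt_self (ℓ + 1) x⟩ hF
    fun _ hy => dist_le_of_mem_dyadicCubeAt (x := x) hy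
  have hself := setDist_le_infDist (mem_dyadicCubeAt_self ℓ x) hF
  rw [IsAdmissible, not_le] at h
  rw [zpow_add_one₀ two_ne_zero] at h hparent
  linarith

lemma exists_isAdmissible_not_isAdmissible_succ (hF : F.Nonempty) (hFc : IsClosed F) (hn : 0 < n)
    (hx : x ∉ F) : ∃ ℓ, IsAdmissible n F ℓ x ∧ ¬ IsAdmissible n F (ℓ + 1) x := by
  have hs : 0 < Real.sqrt n := by positivity
  have hd : 0 < infDist x F / Real.sqrt n :=
    div_pos ((hFc.notMem_iff_infDist_pos hF).1 hx) hs
  obtain ⟨ℓ₀, hlow, hhigh⟩ := exists_mem_Ioc_zpow hd one_lt_two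
  obtain ⟨ℓ, hadm, hmax⟩ := Int.exists_greatest_of_bdd (P := fun ℓ => IsAdmissible n F ℓ x)
    ⟨ℓ₀ + 1, fun ℓ hℓ => by
      have := hℓ.le_infDist hF
      rw [← le_div_iff₀' hs] at this
      exact (zpow_le_zpow_iff_right₀ one_lt_two).1 (this.trans hhigh)⟩
    ⟨ℓ₀ - 1, isAdmissible_of_le_infDist hF <| by
      rw [lt_div_iff₀ hs] at hlow
      rw [zpow_sub_one₀ two_ne_zero]
      linarith⟩
  exact ⟨ℓ, hadm, fun h => by linarith [hmax _ h]⟩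

lemma disjoint_dyadicCubeAt_of_lt (hF : F.Nonempty) {x₁ x₂ : EuclideanSpace ℝ (Fin n)}
    {ℓ₁ ℓ₂ : ℤ} (hlt : ℓ₁ < ℓ₂) (h₁ : ¬ IsAdmissible n F (ℓ₁ + 1) x₁)
    (h₂ : IsAdmissible n F ℓ₂ x₂) :
    Disjoint (dyadicCubeAt n ℓ₁ x₁) (dyadicCubeAt n ℓ₂ x₂) := by
  refine disjoint_left.2 fun z hz₁ hz₂ => h₁ ?_
  have hz₁' : z ∈ dyadicCubeAt n (ℓ₁ + 1) x₁ := dyadicCubeAt_subset_of_le (by omega) hz₁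
  exact (isAdmissible_congr hz₁').1 (((isAdmissible_congr hz₂).2 h₂).of_le hF hlt)

def whitneyCubes (n : ℕ) (F : Set (EuclideanSpace ℝ (Fin n))) :
    Set (Set (EuclideanSpace ℝ (Fin n))) :=
  {Q | ∃ ℓ x, Q = dyadicCubeAt n ℓ x ∧ IsAdmissible n F ℓ x ∧ ¬ IsAdmissible n F (ℓ + 1) x}

lemma pairwise_disjoint_whitneyCubes (hF : F.Nonempty) :
    (whitneyCubes n F).Pairwise Disjoint := by
  rintro _ ⟨ℓ₁, x₁, rfl, h₁, h₁'⟩ _ ⟨ℓ₂, x₂, rfl, h₂, h₂'⟩ hne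
  rcases lt_trichotomy ℓ₁ ℓ₂ with hlt | rfl | hgt
  · exact disjoint_dyadicCubeAt_of_lt hF hlt h₁' h₂
  · exact disjoint_dyadicCubeAt_of_ne hne
  · exact (disjoint_dyadicCubeAt_of_lt hF hgt h₂' h₁).symm

lemma sUnion_whitneyCubes (hF : F.Nonempty) (hFc : IsClosed F) (hn : 0 < n) :
    ⋃₀ whitneyCubes n F = Fᶜ := by
  refine subset_antisymm ?_ fun x hx => ?_
  · rintro y ⟨_, ⟨ℓ, x, rfl, h, -⟩, hy⟩
    exact disjoint_left.1 (h.disjoint hn) hy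
  · obtain ⟨ℓ, h, h'⟩ := exists_isAdmissible_not_isAdmissible_succ hF hFc hn hx
    exact ⟨_, ⟨ℓ, x, rfl, h, h'⟩, mem_dyadicCubeAt_self ℓ x⟩

end Whitney

open Whitney

/-- Whitney decomposition of the complement of a nonempty closed set in `ℝⁿ`. -/
theorem whitney_decomposition (n : ℕ) (F : Set (EuclideanSpace ℝ (Fin n)))
    (hF : F.Nonempty) (hFc : IsClosed F) :
    ∃ 𝒟 : Set (Set (EuclideanSpace ℝ (Fin n))),
      𝒟.Pairwise Disjoint ∧ Fᶜ = ⋃₀ 𝒟 ∧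
      ∀ Q ∈ 𝒟, ∃ (ℓ : ℤ) (m : Fin n → ℤ), Q = dyadicCubeE n ℓ m ∧
        Real.sqrt n * (2 : ℝ) ^ ℓ ≤ setDist Q F ∧
        setDist Q F ≤ 4 * Real.sqrt n * (2 : ℝ) ^ ℓ := by
  rcases Nat.eq_zero_or_pos n with rfl | hn
  · refine ⟨∅, pairwise_empty _, ?_, by simp⟩
    rw [sUnion_empty, Subsingleton.eq_univ_of_nonempty hF, compl_univ]
  refine ⟨whitneyCubes n F, pairwise_disjoint_whitneyCubes hF,
    (sUnion_whitneyCubes hF hFc hn).symm, ?_⟩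
  rintro _ ⟨ℓ, x, rfl, h, h'⟩
  exact ⟨ℓ, _, rfl, h, setDist_le_of_not_isAdmissible_succ hF h'⟩
end

section
/- Let (X, {Q_x}ₓ, μ) be an abstract Hardy–Littlewood system (each Q ∈ Q_x contains x, and 0 < μ(Q) < ∞ for all Q ∈ Q = ⋃ₓ Q_x). Assume: (HL3) for every sequence (Qₙ) of pairwise disjoint members of Q with infₙ μ(Qₙ) > 0 one has μ(⋃ₙ Qₙ) = ∞; and (HL4) there exist constants c > 0 and λ > 1 such that for every Q ∈ Q, μ(Q̃) ≤ c·μ(Q), where Q̃ := ⋃{R ∈ Q : R ∩ Q ≠ ∅, μ(R) ≤ λ·μ(Q)}. Then for every set function F : Q → [0,∞] and every r > 0, μ{x ∈ X : sup_{Q∈Q_x} F(Q)/μ(Q) > r} ≤ c·r⁻¹·‖F‖_Q. -/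
open Set MeasureTheory ENNReal

/-- The norm `‖F‖_𝒬`: supremum of finite sums of `F` over pairwise disjoint members of `𝒬`. -/
noncomputable def hlNorm {X : Type*} (𝒬 : Set (Set X)) (F : Set X → ℝ≥0∞) : ℝ≥0∞ :=
  ⨆ s : {s : Finset (Set X) // ↑s ⊆ 𝒬 ∧ (s : Set (Set X)).Pairwise Disjoint}, ∑ Q ∈ s.1, F Q

/-- The abstract maximal function `M F(x) = sup_{Q ∈ 𝒬ₓ} F(Q)/μ(Q)`. -/
noncomputable def hlMax {X : Type*} (Qx : X → Set (Set X)) (μ : Set X → ℝ≥0∞)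
    (F : Set X → ℝ≥0∞) (x : X) : ℝ≥0∞ :=
  ⨆ Q ∈ Qx x, F Q / μ Q

/-!
Every point of `{M F > r}` lies in some `Q ∈ 𝒬` with `r μ(Q) < F(Q)`, and these sets have
`μ(Q) ≤ r⁻¹ ‖F‖_𝒬`. For bounded sizes the Vitali covering lemma selects a disjoint subfamily `𝒢`
such that each such `Q` meets some `G ∈ 𝒢` with `μ(Q) ≤ λ μ(G)`, i.e. `Q ⊆ G̃`. Hence
`μ{M F > r} ≤ ∑_{G ∈ 𝒢} μ(G̃) ≤ c ∑ μ(G) ≤ c r⁻¹ ∑ F(G) ≤ c r⁻¹ ‖F‖_𝒬`; the family `𝒢` is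
countable because `F > 0` on it and its `F`-sum is finite.
-/

namespace HardyLittlewood

variable {X : Type*}

theorem sum_le_hlNorm {𝒬 : Set (Set X)} (F : Set X → ℝ≥0∞) {T : Finset (Set X)}
    (hT : ↑T ⊆ 𝒬) (hdisj : (T : Set (Set X)).Pairwise Disjoint) :
    ∑ Q ∈ T, F Q ≤ hlNorm 𝒬 F :=
  le_iSup_of_le (⟨T, hT, hdisj⟩ : Subtype _) le_rfl

theorem le_hlNorm {𝒬 : Set (Set X)} (F : Set X → ℝ≥0∞) {Q : Set X} (hQ : Q ∈ 𝒬) :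
    F Q ≤ hlNorm 𝒬 F := by
  simpa using sum_le_hlNorm F (T := {Q}) (by simpa using hQ) (by simp)

theorem tsum_le_hlNorm {𝒬 𝒢 : Set (Set X)} (F : Set X → ℝ≥0∞) (h𝒢 : 𝒢 ⊆ 𝒬)
    (hdisj : 𝒢.Pairwise Disjoint) : ∑' G : 𝒢, F G ≤ hlNorm 𝒬 F := by
  rw [ENNReal.tsum_eq_iSup_sum]
  refine iSup_le fun T => ?_
  rw [← Finset.sum_image fun _ _ _ _ h => Subtype.val_injective h]
  have hT : (T.image Subtype.val : Set (Set X)) ⊆ 𝒢 := by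
    rw [Finset.coe_image]
    exact image_subset_iff.2 fun G _ => G.2
  exact sum_le_hlNorm F (hT.trans h𝒢) (hdisj.mono hT)

theorem countable_of_hlNorm_ne_top {𝒬 𝒢 : Set (Set X)} {F : Set X → ℝ≥0∞} (h𝒢 : 𝒢 ⊆ 𝒬)
    (hdisj : 𝒢.Pairwise Disjoint) (hF : ∀ G ∈ 𝒢, F G ≠ 0) (hN : hlNorm 𝒬 F ≠ ⊤) :
    𝒢.Countable := by
  have hsupp := Summable.countable_support_ennreal
    (ne_top_of_le_ne_top hN (tsum_le_hlNorm F h𝒢 hdisj))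
  have hsupp_univ : Function.support (fun G : 𝒢 => F G) = univ :=
    eq_univ_of_forall fun G => hF G G.2
  rw [hsupp_univ, countable_univ_iff] at hsupp
  exact countable_coe_iff.1 hsupp

theorem exists_mul_lt_of_lt_hlMax {Qx : X → Set (Set X)} {μ F : Set X → ℝ≥0∞} {r : ℝ≥0∞}
    {x : X} (hx : r < hlMax Qx μ F x) : ∃ Q ∈ Qx x, r * μ Q < F Q := by
  obtain ⟨Q, hQ⟩ := lt_iSup_iff.1 hx
  obtain ⟨hQx, hrQ⟩ := lt_iSup_iff.1 hQ
  exact ⟨Q, hQx, ENNReal.mul_lt_of_lt_div hrQ⟩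

theorem exists_disjoint_subfamily_covering_enlargement_ennreal (ℬ : Set (Set X))
    (w : Set X → ℝ≥0∞) {s : ℝ≥0∞} (hs : s ≠ ⊤) (hws : ∀ Q ∈ ℬ, w Q ≤ s) (hne : ∀ Q ∈ ℬ, Q.Nonempty)
    {lam : ℝ≥0∞} (hlam : 1 < lam) :
    ∃ 𝒢 ⊆ ℬ, 𝒢.Pairwise Disjoint ∧
      ∀ Q ∈ ℬ, ∃ G ∈ 𝒢, (Q ∩ G).Nonempty ∧ w Q ≤ lam * w G := by
  obtain ⟨τ, hτ1, hτlam⟩ := ENNReal.lt_iff_exists_nnreal_btwn.1 hlam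
  obtain ⟨𝒢, h𝒢ℬ, hdisj, hcover⟩ := Vitali.exists_disjoint_subfamily_covering_enlargement id ℬ
    (fun Q => (w Q).toReal) τ (by exact_mod_cast hτ1) (fun _ _ => ENNReal.toReal_nonneg)
    s.toReal (fun Q hQ => ENNReal.toReal_mono hs (hws Q hQ)) hne
  refine ⟨𝒢, h𝒢ℬ, hdisj, fun Q hQ => ?_⟩
  obtain ⟨G, hG, hQG, hwQG⟩ := hcover Q hQ
  have hwQ : w Q ≠ ⊤ := ne_top_of_le_ne_top hs (hws Q hQ)
  have hwG : w G ≠ ⊤ := ne_top_of_le_ne_top hs (hws G (h𝒢ℬ hG))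
  refine ⟨G, hG, hQG, ?_⟩
  calc w Q ≤ τ * w G := by
        rw [← ENNReal.ofReal_toReal hwQ, ← ENNReal.ofReal_toReal hwG, ← ENNReal.ofReal_coe_nnreal,
          ← ENNReal.ofReal_mul τ.coe_nonneg]
        exact ENNReal.ofReal_le_ofReal hwQG
    _ ≤ lam * w G := by gcongr

end HardyLittlewood

open HardyLittlewood in
theorem abstract_hl_maximal_inequality_general {X : Type*}
    (Qx : X → Set (Set X)) (μ : MeasureTheory.OuterMeasure X)
    (hmem : ∀ x, ∀ Q ∈ Qx x, x ∈ Q)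
    (c : ℝ≥0∞) (hc : 0 < c) (lam : ℝ≥0∞) (hlam : 1 < lam)
    (hHL4 : ∀ Q ∈ ⋃ x, Qx x,
      μ (⋃₀ {R | R ∈ ⋃ x, Qx x ∧ (R ∩ Q).Nonempty ∧ μ R ≤ lam * μ Q}) ≤ c * μ Q) :
    ∀ F : Set X → ℝ≥0∞, ∀ r : ℝ≥0∞, 0 < r → r ≠ ⊤ →
      μ {x | r < hlMax Qx (μ ·) F x} ≤ c * r⁻¹ * hlNorm (⋃ x, Qx x) F := by
  intro F r hr hrt
  set 𝒬 := ⋃ x, Qx x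
  obtain hN | hN := eq_or_ne (hlNorm 𝒬 F) ⊤
  · rw [hN, ENNReal.mul_top (mul_ne_zero hc.ne' (ENNReal.inv_ne_zero.2 hrt))]
    exact le_top
  set ℬ := {Q | Q ∈ 𝒬 ∧ r * μ Q < F Q}
  have hμF : ∀ Q ∈ ℬ, μ Q ≤ r⁻¹ * F Q := fun Q hQ =>
    (ENNReal.mul_le_iff_le_inv hr.ne' hrt).1 hQ.2.le
  have hne : ∀ Q ∈ ℬ, Q.Nonempty := fun Q hQ => by
    obtain ⟨x, hx⟩ := mem_iUnion.1 hQ.1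
    exact ⟨x, hmem x Q hx⟩
  obtain ⟨𝒢, h𝒢ℬ, hdisj, hcover⟩ :=
    exists_disjoint_subfamily_covering_enlargement_ennreal ℬ (μ ·)
    (ENNReal.mul_ne_top (ENNReal.inv_ne_top.2 hr.ne') hN)
    (fun Q hQ => (hμF Q hQ).trans (by gcongr; exact le_hlNorm F hQ.1)) hne hlam
  have h𝒢𝒬 : 𝒢 ⊆ 𝒬 := fun G hG => (h𝒢ℬ hG).1
  have hcount : 𝒢.Countable := countable_of_hlNorm_ne_top h𝒢𝒬 hdisj
    (fun G hG => (pos_of_gt (h𝒢ℬ hG).2).ne') hN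
  set enlarge := fun G => ⋃₀ {R | R ∈ 𝒬 ∧ (R ∩ G).Nonempty ∧ μ R ≤ lam * μ G}
  have hsub : {x | r < hlMax Qx (μ ·) F x} ⊆ ⋃ G ∈ 𝒢, enlarge G := fun x hx => by
    obtain ⟨Q, hQx, hQ⟩ := exists_mul_lt_of_lt_hlMax hx
    have hQℬ : Q ∈ ℬ := ⟨mem_iUnion.2 ⟨x, hQx⟩, hQ⟩
    obtain ⟨G, hG, hQG, hμQG⟩ := hcover Q hQℬ
    exact mem_biUnion hG ⟨Q, ⟨hQℬ.1, hQG, hμQG⟩, hmem x Q hQx⟩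
  calc μ {x | r < hlMax Qx (μ ·) F x} ≤ ∑' G : 𝒢, μ (enlarge G) :=
        (measure_mono hsub).trans (measure_biUnion_le μ hcount enlarge)
    _ ≤ ∑' G : 𝒢, c * r⁻¹ * F G := ENNReal.tsum_le_tsum fun G =>
        (hHL4 G (h𝒢𝒬 G.2)).trans (by rw [mul_assoc]; gcongr; exact hμF G (h𝒢ℬ G.2))
    _ = c * r⁻¹ * ∑' G : 𝒢, F G := ENNReal.tsum_mul_left
    _ ≤ c * r⁻¹ * hlNorm 𝒬 F := by gcongr; exact tsum_le_hlNorm F h𝒢𝒬 hdisj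

theorem abstract_hl_maximal_inequality {X : Type*}
    (Qx : X → Set (Set X)) (μ : MeasureTheory.OuterMeasure X)
    (hne : ∀ x, (Qx x).Nonempty) (hmem : ∀ x, ∀ Q ∈ Qx x, x ∈ Q)
    (hfin : ∀ Q ∈ ⋃ x, Qx x, 0 < μ Q ∧ μ Q < ∞)
    (hHL3 : ∀ Q : ℕ → Set X, (∀ n, Q n ∈ ⋃ x, Qx x) →
      Pairwise (Function.onFun Disjoint Q) → 0 < ⨅ n, μ (Q n) → μ (⋃ n, Q n) = ∞)
    (c : ℝ≥0∞) (hc : 0 < c) (lam : ℝ≥0∞) (hlam : 1 < lam)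
    (hHL4 : ∀ Q ∈ ⋃ x, Qx x,
      μ (⋃₀ {R | R ∈ ⋃ x, Qx x ∧ (R ∩ Q).Nonempty ∧ μ R ≤ lam * μ Q}) ≤ c * μ Q) :
    ∀ F : Set X → ℝ≥0∞, ∀ r : ℝ≥0∞, 0 < r → r ≠ ⊤ →
      μ {x | r < hlMax Qx (μ ·) F x} ≤ c * r⁻¹ * hlNorm (⋃ x, Qx x) F :=
  abstract_hl_maximal_inequality_general Qx μ hmem c hc lam hlam hHL4
end

section
/- Let (X, d, μ) be a space of homogeneous type with quasimetric constant K and doubling constants α, β > 1 (μ(αB) ≤ β μ(B) for all balls B), and let m be the smallest natural number with α^m ≥ 2K(4K²+1). Then for every f ∈ L¹(μ) and every r > 0, μ{x ∈ X : M f(x) > r} ≤ r⁻¹ β^m ‖f‖_{L¹(μ)}, where M f(x) := sup over open balls Q containing x of (1/μ(Q)) ∫_Q |f| dμ. -/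
open Set MeasureTheory ENNReal

/-!
By the Vitali covering lemma, the balls on which the average of `|f|` exceeds `r` and whose radii
are bounded by `R` contain a disjoint subfamily whose enlargements by the factor `α ^ m` cover them.
The choice of `m` makes this enlargement factor beat the quasi-triangle inequality applied twice,
while `m`-fold doubling bounds the measure of each enlarged ball by `β ^ m` times that of the
original one, which is at most `r⁻¹ ∫_B |f|`. Disjointness sums these to `r⁻¹ β ^ m ‖f‖₁`, and
letting `R → ∞` gives the weak type bound.
-/

/-- The open ball of a quasimetric `d`. -/
def qball {X : Type*} (d : X → X → ℝ) (c : X) (ρ : ℝ) : Set X := {y | d c y < ρ}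

lemma Set.PairwiseDisjoint.countable_of_measure_pos {ι Ω : Type*} [MeasurableSpace Ω]
    {ν : Measure Ω} [SFinite ν] {u : Set ι} {B : ι → Set Ω} (hdisj : u.PairwiseDisjoint B)
    (hB : ∀ i ∈ u, MeasurableSet (B i)) (hpos : ∀ i ∈ u, 0 < ν (B i)) : u.Countable := by
  have hcount := Measure.countable_meas_pos_of_disjoint_iUnion₀ (μ := ν)
    (As := fun i : u => B i) (fun i => (hB i i.2).nullMeasurableSet)
    (fun i j hij => (hdisj i.2 j.2 (Subtype.coe_ne_coe.mpr hij)).aedisjoint)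
  rw [show {i : u | 0 < ν (B i)} = univ from eq_univ_of_forall fun i => hpos i i.2] at hcount
  exact countable_coe_iff.mp (countable_univ_iff.mp hcount)

section Quasimetric

variable {X : Type*} {d : X → X → ℝ}

lemma qball_mono {c : X} {ρ ρ' : ℝ} (h : ρ ≤ ρ') : qball d c ρ ⊆ qball d c ρ' :=
  fun _ hy => lt_of_lt_of_le hy h

lemma qball_subset_qball_of_nonempty_inter {K : ℝ} (hK : 0 < K)
    (hd_symm : ∀ x y, d x y = d y x) (hd_tri : ∀ x y z, d x z ≤ K * (d x y + d y z))
    {c₁ c₂ : X} {ρ₁ ρ₂ : ℝ} (h : (qball d c₁ ρ₁ ∩ qball d c₂ ρ₂).Nonempty) :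
    qball d c₂ ρ₂ ⊆ qball d c₁ (K * (K * (ρ₁ + ρ₂) + ρ₂)) := by
  obtain ⟨w, hw₁, hw₂⟩ := h
  intro z hz
  simp only [qball, mem_ofPred_eq] at hw₁ hw₂ hz ⊢
  have hc : d c₁ c₂ ≤ K * (ρ₁ + ρ₂) :=
    (hd_tri c₁ w c₂).trans (by rw [hd_symm w c₂]; gcongr)
  calc d c₁ z ≤ K * (d c₁ c₂ + d c₂ z) := hd_tri c₁ c₂ z
    _ < K * (K * (ρ₁ + ρ₂) + ρ₂) := mul_lt_mul_of_pos_left (add_lt_add_of_le_of_lt hc hz) hK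

variable [MeasurableSpace X]

lemma measure_qball_pow_mul_le {μ : Measure X} {α : ℝ} {C : ℝ≥0∞} (hα : 0 < α)
    (hdouble : ∀ c ρ, 0 < ρ → μ (qball d c (α * ρ)) ≤ C * μ (qball d c ρ))
    (n : ℕ) (c : X) {ρ : ℝ} (hρ : 0 < ρ) :
    μ (qball d c (α ^ n * ρ)) ≤ C ^ n * μ (qball d c ρ) := by
  induction n with
  | zero => simp
  | succ n ih =>
    calc μ (qball d c (α ^ (n + 1) * ρ)) = μ (qball d c (α * (α ^ n * ρ))) := by
          rw [pow_succ', mul_assoc]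
      _ ≤ C * μ (qball d c (α ^ n * ρ)) := hdouble c _ (by positivity)
      _ ≤ C * (C ^ n * μ (qball d c ρ)) := by gcongr
      _ = C ^ (n + 1) * μ (qball d c ρ) := by rw [pow_succ', mul_assoc]

/-- For `ν = |f| μ` this is the maximal function `M f`. -/
noncomputable def qballMaximal (d : X → X → ℝ) (μ ν : Measure X) (x : X) : ℝ≥0∞ :=
  ⨆ B ∈ {B : Set X | (∃ c ρ, 0 < ρ ∧ B = qball d c ρ) ∧ x ∈ B}, ν B / μ B

lemma qballMaximal_withDensity (hmeas : ∀ c ρ, 0 < ρ → MeasurableSet (qball d c ρ))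
    (μ : Measure X) (g : X → ℝ≥0∞) (x : X) :
    qballMaximal d μ (μ.withDensity g) x =
      ⨆ B ∈ {B : Set X | (∃ c ρ, 0 < ρ ∧ B = qball d c ρ) ∧ x ∈ B}, (∫⁻ y in B, g y ∂μ) / μ B := by
  refine iSup_congr fun B => iSup_congr fun hB => ?_
  obtain ⟨⟨c, ρ, hρ, rfl⟩, -⟩ := hB
  rw [withDensity_apply _ (hmeas c ρ hρ)]

def heavyQballs (d : X → X → ℝ) (μ ν : Measure X) (r : ℝ≥0∞) (R : ℝ) : Set (X × ℝ) :=
  {p | 0 < p.2 ∧ p.2 ≤ R ∧ r * μ (qball d p.1 p.2) < ν (qball d p.1 p.2)}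

lemma heavyQballs_mono {μ ν : Measure X} {r : ℝ≥0∞} : Monotone (heavyQballs d μ ν r) :=
  fun _ _ hR _ hp => ⟨hp.1, hp.2.1.trans hR, hp.2.2⟩

lemma setOf_lt_qballMaximal_subset {μ ν : Measure X} {r : ℝ≥0∞} (hr₀ : r ≠ 0) (hr : r ≠ ∞) :
    {x | r < qballMaximal d μ ν x} ⊆
      ⋃ n : ℕ, ⋃ p ∈ heavyQballs d μ ν r n, qball d p.1 p.2 := by
  intro x hx
  rw [mem_ofPred_eq, qballMaximal] at hx
  obtain ⟨B, hB⟩ := lt_iSup_iff.mp hx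
  obtain ⟨⟨⟨c, ρ, hρ, rfl⟩, hxB⟩, hrB⟩ := lt_iSup_iff.mp hB
  have hheavy : r * μ (qball d c ρ) < ν (qball d c ρ) :=
    (ENNReal.lt_div_iff_mul_lt (Or.inr hr) (Or.inr hr₀)).mp hrB
  exact mem_iUnion.mpr ⟨⌈ρ⌉₊, mem_iUnion₂.mpr ⟨(c, ρ), ⟨hρ, Nat.le_ceil ρ, hheavy⟩, hxB⟩⟩

lemma measure_biUnion_heavyQballs_le {μ ν : Measure X} [SFinite ν] {r : ℝ≥0∞}
    (hr₀ : r ≠ 0) (hr : r ≠ ∞) (hmeas : ∀ c ρ, 0 < ρ → MeasurableSet (qball d c ρ))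
    {A : ℝ} (henlarge : ∀ c₁ c₂ ρ₁ ρ₂, 0 < ρ₁ → ρ₂ ≤ 2 * ρ₁ →
      (qball d c₁ ρ₁ ∩ qball d c₂ ρ₂).Nonempty → qball d c₂ ρ₂ ⊆ qball d c₁ (A * ρ₁))
    {C : ℝ≥0∞} (hC : ∀ c ρ, 0 < ρ → μ (qball d c (A * ρ)) ≤ C * μ (qball d c ρ)) (R : ℝ) :
    μ (⋃ p ∈ heavyQballs d μ ν r R, qball d p.1 p.2) ≤ r⁻¹ * C * ν univ := by
  set t := heavyQballs d μ ν r R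
  have hνpos : ∀ p ∈ t, 0 < ν (qball d p.1 p.2) := fun p hp => pos_of_gt hp.2.2
  obtain ⟨u, hut, hdisj, hcover⟩ :=
    Vitali.exists_disjoint_subfamily_covering_enlargement (fun p : X × ℝ => qball d p.1 p.2) t
      Prod.snd 2 one_lt_two (fun p hp => hp.1.le) R (fun p hp => hp.2.1)
      (fun p hp => nonempty_of_measure_ne_zero (hνpos p hp).ne')
  have hu : u.Countable := hdisj.countable_of_measure_pos (fun p hp => hmeas _ _ (hut hp).1)
    fun p hp => hνpos p (hut hp)
  have hsub : ⋃ p ∈ t, qball d p.1 p.2 ⊆ ⋃ p ∈ u, qball d p.1 (A * p.2) := by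
    refine iUnion₂_subset fun a ha => ?_
    obtain ⟨b, hb, hab, hle⟩ := hcover a ha
    exact (henlarge b.1 a.1 b.2 a.2 (hut hb).1 hle (inter_comm _ _ ▸ hab)).trans
      (subset_biUnion_of_mem (u := fun p : X × ℝ => qball d p.1 (A * p.2)) hb)
  have hball : ∀ p ∈ u, μ (qball d p.1 (A * p.2)) ≤ r⁻¹ * C * ν (qball d p.1 p.2) := by
    intro p hp
    have hμ : μ (qball d p.1 p.2) ≤ r⁻¹ * ν (qball d p.1 p.2) := by
      rw [← ENNReal.div_eq_inv_mul, ENNReal.le_div_iff_mul_le (Or.inl hr₀) (Or.inl hr), mul_comm]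
      exact (hut hp).2.2.le
    calc μ (qball d p.1 (A * p.2)) ≤ C * μ (qball d p.1 p.2) := hC _ _ (hut hp).1
      _ ≤ C * (r⁻¹ * ν (qball d p.1 p.2)) := by gcongr
      _ = r⁻¹ * C * ν (qball d p.1 p.2) := by ring
  calc μ (⋃ p ∈ t, qball d p.1 p.2) ≤ μ (⋃ p ∈ u, qball d p.1 (A * p.2)) := measure_mono hsub
    _ ≤ ∑' p : u, μ (qball d p.1.1 (A * p.1.2)) := measure_biUnion_le μ hu _
    _ ≤ ∑' p : u, r⁻¹ * C * ν (qball d p.1.1 p.1.2) :=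
        ENNReal.tsum_le_tsum fun p => hball p.1 p.2
    _ = r⁻¹ * C * ν (⋃ p ∈ u, qball d p.1 p.2) := by
        rw [ENNReal.tsum_mul_left, measure_biUnion hu hdisj fun p hp => hmeas _ _ (hut hp).1]
    _ ≤ r⁻¹ * C * ν univ := by gcongr; exact subset_univ _

theorem measure_lt_qballMaximal_le {μ ν : Measure X} [SFinite ν] {r : ℝ≥0∞}
    (hr₀ : r ≠ 0) (hr : r ≠ ∞) (hmeas : ∀ c ρ, 0 < ρ → MeasurableSet (qball d c ρ))
    {A : ℝ} (henlarge : ∀ c₁ c₂ ρ₁ ρ₂, 0 < ρ₁ → ρ₂ ≤ 2 * ρ₁ →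
      (qball d c₁ ρ₁ ∩ qball d c₂ ρ₂).Nonempty → qball d c₂ ρ₂ ⊆ qball d c₁ (A * ρ₁))
    {C : ℝ≥0∞} (hC : ∀ c ρ, 0 < ρ → μ (qball d c (A * ρ)) ≤ C * μ (qball d c ρ)) :
    μ {x | r < qballMaximal d μ ν x} ≤ r⁻¹ * C * ν univ := by
  have hmono : Monotone fun n : ℕ => ⋃ p ∈ heavyQballs d μ ν r n, qball d p.1 p.2 :=
    fun _ _ hmn => biUnion_subset_biUnion_left (heavyQballs_mono (Nat.cast_le.mpr hmn))
  calc μ {x | r < qballMaximal d μ ν x}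
      ≤ μ (⋃ n : ℕ, ⋃ p ∈ heavyQballs d μ ν r n, qball d p.1 p.2) :=
        measure_mono (setOf_lt_qballMaximal_subset hr₀ hr)
    _ = ⨆ n : ℕ, μ (⋃ p ∈ heavyQballs d μ ν r n, qball d p.1 p.2) :=
        hmono.measure_iUnion
    _ ≤ r⁻¹ * C * ν univ :=
        iSup_le fun n => measure_biUnion_heavyQballs_le hr₀ hr hmeas henlarge hC n

end Quasimetric

theorem homogeneous_hl_maximal_inequality_general {X : Type*} [MeasurableSpace X]
    (d : X → X → ℝ) (K : ℝ) (hK : 1 ≤ K)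
    (hd_symm : ∀ x y, d x y = d y x)
    (hd_tri : ∀ x y z, d x z ≤ K * (d x y + d y z))
    (μ : MeasureTheory.Measure X) (α β : ℝ) (hα : 1 < α)
    (hmeas : ∀ c ρ, 0 < ρ → MeasurableSet (qball d c ρ))
    (hdouble : ∀ c ρ, 0 < ρ → μ (qball d c (α * ρ)) ≤ ENNReal.ofReal β * μ (qball d c ρ))
    (m : ℕ) (hm : 2 * K * (4 * K ^ 2 + 1) ≤ α ^ m)
    (f : X → ℂ) (hf : MeasureTheory.Integrable f μ) :
    ∀ r : ℝ≥0∞, 0 < r → r ≠ ⊤ →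
      μ {x | r < ⨆ B ∈ {B : Set X | (∃ c ρ, 0 < ρ ∧ B = qball d c ρ) ∧ x ∈ B},
          (∫⁻ y in B, ‖f y‖₊ ∂μ) / μ B} ≤
        r⁻¹ * (ENNReal.ofReal β) ^ m * ∫⁻ y, ‖f y‖₊ ∂μ := by
  intro r hr₀ hr
  have henlarge : ∀ c₁ c₂ ρ₁ ρ₂, 0 < ρ₁ → ρ₂ ≤ 2 * ρ₁ →
      (qball d c₁ ρ₁ ∩ qball d c₂ ρ₂).Nonempty → qball d c₂ ρ₂ ⊆ qball d c₁ (α ^ m * ρ₁) := by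
    intro c₁ c₂ ρ₁ ρ₂ hρ₁ hρ₂ h
    refine (qball_subset_qball_of_nonempty_inter (by linarith) hd_symm hd_tri h).trans
      (qball_mono ?_)
    -- `K (K (ρ₁ + ρ₂) + ρ₂) ≤ (3 K² + 2 K) ρ₁ ≤ 2 K (4 K² + 1) ρ₁` as `K ≥ 1`
    nlinarith [mul_le_mul_of_nonneg_right hm hρ₁.le, mul_nonneg (by linarith : (0 : ℝ) ≤ K - 1)
      (mul_nonneg (by positivity : (0 : ℝ) ≤ K) hρ₁.le)]
  have : IsFiniteMeasure (μ.withDensity fun y => (‖f y‖₊ : ℝ≥0∞)) :=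
    isFiniteMeasure_withDensity hf.2.ne
  have hmax := measure_lt_qballMaximal_le (ν := μ.withDensity fun y => (‖f y‖₊ : ℝ≥0∞))
    hr₀.ne' hr hmeas henlarge
    (fun c ρ hρ => measure_qball_pow_mul_le (by linarith) hdouble m c hρ)
  simpa only [qballMaximal_withDensity hmeas, withDensity_apply _ MeasurableSet.univ,
    Measure.restrict_univ] using hmax

theorem homogeneous_hl_maximal_inequality {X : Type*} [MeasurableSpace X]
    (d : X → X → ℝ) (K : ℝ) (hK : 1 ≤ K)
    (hd_eq : ∀ x y, d x y = 0 ↔ x = y) (hd_symm : ∀ x y, d x y = d y x)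
    (hd_tri : ∀ x y z, d x z ≤ K * (d x y + d y z))
    (μ : MeasureTheory.Measure X) (α β : ℝ) (hα : 1 < α) (hβ : 1 < β)
    (hmeas : ∀ c ρ, 0 < ρ → MeasurableSet (qball d c ρ))
    (hball : ∀ c ρ, 0 < ρ → 0 < μ (qball d c ρ) ∧ μ (qball d c ρ) < ∞)
    (hdouble : ∀ c ρ, 0 < ρ → μ (qball d c (α * ρ)) ≤ ENNReal.ofReal β * μ (qball d c ρ))
    (m : ℕ) (hm : 2 * K * (4 * K ^ 2 + 1) ≤ α ^ m)
    (hm_min : ∀ k : ℕ, k < m → α ^ k < 2 * K * (4 * K ^ 2 + 1))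
    (f : X → ℂ) (hf : MeasureTheory.Integrable f μ) :
    ∀ r : ℝ≥0∞, 0 < r → r ≠ ⊤ →
      μ {x | r < ⨆ B ∈ {B : Set X | (∃ c ρ, 0 < ρ ∧ B = qball d c ρ) ∧ x ∈ B},
          (∫⁻ y in B, ‖f y‖₊ ∂μ) / μ B} ≤
        r⁻¹ * (ENNReal.ofReal β) ^ m * ∫⁻ y, ‖f y‖₊ ∂μ :=
  homogeneous_hl_maximal_inequality_general d K hK hd_symm hd_tri μ α β hα hmeas hdouble m hm f hf
end

section
/- Let (X, {Q_x}, μ) be an abstract Hardy–Littlewood system with Q = ⋃ₓ Q_x countable, each member of Q Carathéodory measurable with respect to the outer measure μ, Q ∩ Q' ∈ {Q, Q', ∅} for all Q, Q' ∈ Q, μ(Q) ≤ μ(Q') whenever Q ⊊ Q' in Q, and for every ε > 0 the set {μ(Q) : Q ∈ Q, μ(Q) > ε} has no limit point in (0,∞). Then for every set function F : Q → [0,∞] and r > 0, μ{x : sup_{Q∈Q_x} F(Q)/μ(Q) > r} ≤ r⁻¹ ‖F‖_Q; i.e., the Hardy–Littlewood maximal constant is at most 1. -/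
open Set MeasureTheory ENNReal

/-!
Call `Q` bad if `F Q > r μ Q`. The bad cubes form a laminar family, so the bad cubes containing
a fixed bad cube `Q` form a chain; its union, the branch of `Q`, has measure equal to the supremum
of the measures in the chain (continuity from below, using Carathéodory measurability). This
supremum is finite, being at most `‖F‖ / r`, and since the measures of cubes do not accumulate
it is attained by a single bad cube `R`, whence `μ (branch Q) = μ R ≤ F R / r`. Distinct branches
are disjoint and cover the level set of the maximal function, so its measure is at most `1 / r`
times a sum of `F` over pairwise disjoint cubes.
-/

section

variable {X : Type*}

theorem le_hlNorm {𝒬 : Set (Set X)} (F : Set X → ℝ≥0∞) {Q : Set X} (hQ : Q ∈ 𝒬) :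
    F Q ≤ hlNorm 𝒬 F := by
  unfold hlNorm
  exact le_iSup_of_le ⟨{Q}, by simpa using hQ, by simp⟩ (by simp)

theorem tsum_le_hlNorm {ι : Type*} {𝒬 : Set (Set X)} (F : Set X → ℝ≥0∞) {Q : ι → Set X}
    (hQ𝒬 : ∀ i, Q i ∈ 𝒬) (hdisj : Pairwise (Function.onFun Disjoint Q))
    (hne : ∀ i, (Q i).Nonempty) :
    ∑' i, F (Q i) ≤ hlNorm 𝒬 F := by
  classical
  have hinj : Function.Injective Q := fun i j hij ↦ by
    by_contra hij'
    have hii := hdisj hij'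
    rw [Function.onFun, hij, disjoint_self] at hii
    exact (hne j).ne_empty hii
  rw [ENNReal.tsum_eq_iSup_sum]
  refine iSup_le fun t ↦ ?_
  rw [← Finset.sum_image fun i _ j _ h ↦ hinj h]
  unfold hlNorm
  refine le_iSup_of_le ⟨t.image Q, ?_, ?_⟩ le_rfl
  · simp only [Finset.coe_image]
    exact image_subset_iff.2 fun i _ ↦ hQ𝒬 i
  · simp only [Finset.coe_image]
    exact (hdisj.set_pairwise _).image

theorem setOf_lt_hlMax_subset (Qx : X → Set (Set X)) (μ : Set X → ℝ≥0∞) (F : Set X → ℝ≥0∞)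
    (r : ℝ≥0∞) (hmem : ∀ x, ∀ Q ∈ Qx x, x ∈ Q) :
    {x | r < hlMax Qx μ F x} ⊆ ⋃₀ {Q ∈ ⋃ x, Qx x | r < F Q / μ Q} := by
  intro x hx
  obtain ⟨Q, hQx, hrQ⟩ : ∃ Q ∈ Qx x, r < F Q / μ Q := by simpa [hlMax, lt_iSup_iff] using hx
  exact ⟨Q, ⟨mem_iUnion.2 ⟨x, hQx⟩, hrQ⟩, hmem x Q hQx⟩

def IsLaminar (𝒞 : Set (Set X)) : Prop :=
  ∀ ⦃Q⦄, Q ∈ 𝒞 → ∀ ⦃Q'⦄, Q' ∈ 𝒞 → Q ⊆ Q' ∨ Q' ⊆ Q ∨ Disjoint Q Q'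

def branch (𝒞 : Set (Set X)) (Q : Set X) : Set X :=
  ⋃₀ {R ∈ 𝒞 | Q ⊆ R}

namespace IsLaminar

variable {𝒞 : Set (Set X)} {Q Q' : Set X} {x : X}

theorem of_inter_trichotomy
    (h : ∀ Q ∈ 𝒞, ∀ Q' ∈ 𝒞, Q ∩ Q' = Q ∨ Q ∩ Q' = Q' ∨ Q ∩ Q' = ∅) : IsLaminar 𝒞 := by
  intro Q hQ Q' hQ'
  simpa only [inter_eq_left, inter_eq_right, ← disjoint_iff_inter_eq_empty] using h Q hQ Q' hQ'

theorem mono {𝒟 : Set (Set X)} (h : IsLaminar 𝒞) (h𝒟 : 𝒟 ⊆ 𝒞) : IsLaminar 𝒟 :=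
  fun _ hQ _ hQ' ↦ h (h𝒟 hQ) (h𝒟 hQ')

theorem subset_or_subset (h : IsLaminar 𝒞) (hQ : Q ∈ 𝒞) (hQ' : Q' ∈ 𝒞) (hx : x ∈ Q)
    (hx' : x ∈ Q') : Q ⊆ Q' ∨ Q' ⊆ Q := by
  rcases h hQ hQ' with h | h | h
  exacts [.inl h, .inr h, absurd (h.notMem_of_mem_left hx) (not_not.2 hx')]

theorem directedOn_supersets (h : IsLaminar 𝒞) (hx : x ∈ Q) :
    DirectedOn (· ⊆ ·) {R ∈ 𝒞 | Q ⊆ R} := by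
  rintro R₁ ⟨hR₁, hQR₁⟩ R₂ ⟨hR₂, hQR₂⟩
  rcases h.subset_or_subset hR₁ hR₂ (hQR₁ hx) (hQR₂ hx) with h12 | h21
  exacts [⟨R₂, ⟨hR₂, hQR₂⟩, h12, subset_rfl⟩, ⟨R₁, ⟨hR₁, hQR₁⟩, subset_rfl, h21⟩]

theorem branch_eq_of_subset (h : IsLaminar 𝒞) (hx : x ∈ Q) (hQ' : Q' ∈ 𝒞) (hQQ' : Q ⊆ Q') :
    branch 𝒞 Q = branch 𝒞 Q' := by
  refine (sUnion_subset ?_).antisymm (sUnion_mono fun R hR ↦ ⟨hR.1, hQQ'.trans hR.2⟩)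
  rintro R ⟨hR, hQR⟩
  rcases h.subset_or_subset hR hQ' (hQR hx) (hQQ' hx) with hRQ' | hQ'R
  · exact hRQ'.trans (subset_sUnion_of_mem ⟨hQ', subset_rfl⟩)
  · exact subset_sUnion_of_mem ⟨hR, hQ'R⟩

theorem pairwiseDisjoint_branch (h : IsLaminar 𝒞) (hne : ∀ Q ∈ 𝒞, Q.Nonempty) :
    (branch 𝒞 '' 𝒞).PairwiseDisjoint id := by
  rintro _ ⟨Q, hQ, rfl⟩ _ ⟨Q', hQ', rfl⟩ hQQ'
  refine disjoint_left.2 fun z ⟨R, ⟨hR, hQR⟩, hzR⟩ ⟨R', ⟨hR', hQ'R'⟩, hzR'⟩ ↦ hQQ' ?_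
  obtain ⟨x, hx⟩ := hne Q hQ
  obtain ⟨x', hx'⟩ := hne Q' hQ'
  rw [h.branch_eq_of_subset hx hR hQR, h.branch_eq_of_subset hx' hR' hQ'R']
  rcases h.subset_or_subset hR hR' hzR hzR' with hRR' | hR'R
  · exact h.branch_eq_of_subset hzR hR' hRR'
  · exact (h.branch_eq_of_subset hzR' hR hR'R).symm

end IsLaminar

theorem subset_branch {𝒞 : Set (Set X)} {Q : Set X} (hQ : Q ∈ 𝒞) : Q ⊆ branch 𝒞 Q :=
  subset_sUnion_of_mem ⟨hQ, subset_rfl⟩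

theorem sUnion_subset_sUnion_branch (𝒞 : Set (Set X)) : ⋃₀ 𝒞 ⊆ ⋃₀ (branch 𝒞 '' 𝒞) :=
  sUnion_subset fun _ hQ ↦ (subset_branch hQ).trans (subset_sUnion_of_mem (mem_image_of_mem _ hQ))

theorem ENNReal.le_inv_mul_of_lt_div {a b r : ℝ≥0∞} (h : r < a / b) : b ≤ r⁻¹ * a := by
  have ha : a ≠ 0 := by
    rintro rfl
    simp at h
  rw [← ENNReal.div_eq_inv_mul, ENNReal.le_div_iff_mul_le (.inr ha) (.inl h.ne_top)]
  exact ENNReal.mul_le_of_le_div' h.le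

theorem sSup_mem_of_notMem_closure {α : Type*} [CompleteLinearOrder α] [TopologicalSpace α]
    [OrderTopology α] {S : Set α} {b : α} (hb : b < sSup S)
    (h : sSup S ∉ closure ((S ∩ Ioi b) \ {sSup S})) : sSup S ∈ S := by
  by_contra hS
  refine h (IsLUB.mem_closure ⟨fun s hs ↦ le_sSup hs.1.1, fun u hu ↦ ?_⟩ ?_)
  · refine le_of_not_gt fun hu' ↦ ?_
    obtain ⟨s, hs, hus⟩ := lt_sSup_iff.1 (max_lt hb hu')
    exact (max_lt_iff.1 hus).2.not_ge (hu ⟨⟨hs, (max_lt_iff.1 hus).1⟩, ne_of_mem_of_not_mem hs hS⟩)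
  · obtain ⟨s, hs, hbs⟩ := lt_sSup_iff.1 hb
    exact ⟨s, ⟨hs, hbs⟩, ne_of_mem_of_not_mem hs hS⟩

namespace MeasureTheory.OuterMeasure

variable (μ : OuterMeasure X) {𝒞 : Set (Set X)}

theorem nonempty_of_measure_pos {s : Set X} (h : 0 < μ s) : s.Nonempty := by
  rw [nonempty_iff_ne_empty]
  rintro rfl
  simp at h

theorem measure_sUnion_eq_iSup_of_directedOn (hc : 𝒞.Countable)
    (hcar : ∀ R ∈ 𝒞, μ.IsCaratheodory R) (hd : DirectedOn (· ⊆ ·) 𝒞) :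
    μ (⋃₀ 𝒞) = ⨆ R ∈ 𝒞, μ R := by
  let _ : MeasurableSpace X := μ.caratheodory
  have hmeas : ∀ R ∈ 𝒞, MeasurableSet R := hcar
  rw [sUnion_eq_biUnion, ← toMeasure_apply μ le_rfl (.biUnion hc hmeas),
    measure_biUnion_eq_iSup hc hd]
  exact iSup_congr fun R ↦ iSup_congr fun hR ↦ toMeasure_apply μ le_rfl (hmeas R hR)

theorem measure_sUnion_le_mul_hlNorm {ℬ 𝒬 : Set (Set X)} (F : Set X → ℝ≥0∞) (c : ℝ≥0∞)
    (hℬ : ℬ.Countable) (hdisj : ℬ.PairwiseDisjoint id)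
    (hctrl : ∀ B ∈ ℬ, ∃ Q ∈ 𝒬, Q.Nonempty ∧ Q ⊆ B ∧ μ B ≤ c * F Q) :
    μ (⋃₀ ℬ) ≤ c * hlNorm 𝒬 F := by
  have := hℬ.to_subtype
  choose Q hQ𝒬 hQne hQB hμB using fun B : ℬ ↦ hctrl B B.2
  have hQdisj : Pairwise (Function.onFun Disjoint Q) := fun B B' hBB' ↦
    (hdisj B.2 B'.2 (Subtype.coe_injective.ne hBB')).mono (hQB B) (hQB B')
  calc μ (⋃₀ ℬ) = μ (⋃ B : ℬ, B) := by rw [sUnion_eq_iUnion]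
    _ ≤ ∑' B : ℬ, μ B := measure_iUnion_le _
    _ ≤ ∑' B : ℬ, c * F (Q B) := ENNReal.tsum_le_tsum hμB
    _ = c * ∑' B : ℬ, F (Q B) := ENNReal.tsum_mul_left
    _ ≤ c * hlNorm 𝒬 F := by gcongr; exact tsum_le_hlNorm F hQ𝒬 hQdisj hQne

end MeasureTheory.OuterMeasure

theorem IsLaminar.exists_measure_branch_eq (μ : OuterMeasure X) {𝒞 : Set (Set X)} {Q : Set X}
    (hlam : IsLaminar 𝒞) (hc : 𝒞.Countable) (hcar : ∀ R ∈ 𝒞, μ.IsCaratheodory R)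
    {M : ℝ≥0∞} (hbdd : ∀ R ∈ 𝒞, μ R ≤ M) (hM : M ≠ ∞)
    (hdiscrete : ∀ ε : ℝ≥0∞, 0 < ε → ∀ a ∈ Ioo (0 : ℝ≥0∞) ∞,
      a ∉ closure ((μ '' 𝒞 ∩ Ioi ε) \ {a}))
    (hQ : Q ∈ 𝒞) (hQpos : 0 < μ Q) : ∃ R ∈ 𝒞, Q ⊆ R ∧ μ (branch 𝒞 Q) = μ R := by
  set C := {R ∈ 𝒞 | Q ⊆ R}
  obtain ⟨x, hx⟩ := μ.nonempty_of_measure_pos hQpos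
  have hμbranch : μ (branch 𝒞 Q) = sSup (μ '' C) := by
    rw [sSup_image]
    exact μ.measure_sUnion_eq_iSup_of_directedOn (hc.mono (sep_subset _ _))
      (fun R hR ↦ hcar R hR.1) (hlam.directedOn_supersets hx)
  have hpos : 0 < sSup (μ '' C) := hQpos.trans_le (le_sSup (mem_image_of_mem μ ⟨hQ, subset_rfl⟩))
  have hfin : sSup (μ '' C) ≠ ∞ := by
    refine ne_top_of_le_ne_top hM (sSup_le ?_)
    exact forall_mem_image.2 fun R hR ↦ hbdd R hR.1
  obtain ⟨R, hR, hμR⟩ : sSup (μ '' C) ∈ μ '' C := by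
    refine sSup_mem_of_notMem_closure (ENNReal.half_lt_self hpos.ne' hfin) fun hmem ↦ ?_
    refine hdiscrete _ (ENNReal.half_pos hpos.ne') _ ⟨hpos, hfin.lt_top⟩ (closure_mono ?_ hmem)
    gcongr
    exact sep_subset _ _
  exact ⟨R, hR.1, hR.2, hμbranch.trans hμR.symm⟩

end

theorem dyadic_hl_constant_le_one_general {X : Type*}
    (Qx : X → Set (Set X)) (μ : MeasureTheory.OuterMeasure X)
    (hmem : ∀ x, ∀ Q ∈ Qx x, x ∈ Q)
    (hfin : ∀ Q ∈ ⋃ x, Qx x, 0 < μ Q ∧ μ Q < ∞)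
    (hD1 : ∀ Q ∈ ⋃ x, Qx x, μ.IsCaratheodory Q)
    (hD2 : (⋃ x, Qx x).Countable)
    (hD3 : ∀ Q ∈ ⋃ x, Qx x, ∀ Q' ∈ ⋃ x, Qx x,
      Q ∩ Q' = Q ∨ Q ∩ Q' = Q' ∨ Q ∩ Q' = ∅)
    (hD5 : ∀ ε : ℝ≥0∞, 0 < ε →
      ∀ a ∈ Set.Ioo (0 : ℝ≥0∞) ⊤,
        a ∉ closure ({v | ∃ Q ∈ ⋃ x, Qx x, ε < μ Q ∧ μ Q = v} \ {a})) :
    ∀ F : Set X → ℝ≥0∞, ∀ r : ℝ≥0∞, 0 < r → r ≠ ⊤ →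
      μ {x | r < hlMax Qx (μ ·) F x} ≤ r⁻¹ * hlNorm (⋃ x, Qx x) F := by
  intro F r hr hrtop
  set 𝒬 := ⋃ x, Qx x
  by_cases hF : hlNorm 𝒬 F = ∞
  · simp [hF, ENNReal.mul_top, hrtop]
  have hne : ∀ Q ∈ 𝒬, Q.Nonempty := fun Q hQ ↦ μ.nonempty_of_measure_pos (hfin Q hQ).1
  set 𝒞 := {Q ∈ 𝒬 | r < F Q / μ Q}
  have h𝒞 : 𝒞 ⊆ 𝒬 := sep_subset _ _
  have hlam : IsLaminar 𝒞 := (IsLaminar.of_inter_trichotomy hD3).mono h𝒞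
  have hcontrol : ∀ Q ∈ 𝒞, μ Q ≤ r⁻¹ * F Q := fun Q hQ ↦ ENNReal.le_inv_mul_of_lt_div hQ.2
  have hbdd : ∀ R ∈ 𝒞, μ R ≤ r⁻¹ * hlNorm 𝒬 F := fun R hR ↦
    (hcontrol R hR).trans (by gcongr; exact le_hlNorm F hR.1)
  have hdiscrete : ∀ ε : ℝ≥0∞, 0 < ε → ∀ a ∈ Ioo (0 : ℝ≥0∞) ∞,
      a ∉ closure ((μ '' 𝒞 ∩ Ioi ε) \ {a}) := by
    refine fun ε hε a ha hcl ↦ hD5 ε hε a ha (closure_mono (sdiff_subset_sdiff_left ?_) hcl)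
    rintro _ ⟨⟨R, hR, rfl⟩, hεR⟩
    exact ⟨R, h𝒞 hR, hεR, rfl⟩
  have hbranch : ∀ B ∈ branch 𝒞 '' 𝒞, ∃ R ∈ 𝒬, R.Nonempty ∧ R ⊆ B ∧ μ B ≤ r⁻¹ * F R := by
    rintro _ ⟨Q, hQ, rfl⟩
    obtain ⟨R, hR, hQR, hμ⟩ := hlam.exists_measure_branch_eq μ (hD2.mono h𝒞)
      (fun R hR ↦ hD1 R hR.1) hbdd (ENNReal.mul_ne_top (ENNReal.inv_ne_top.2 hr.ne') hF)
      hdiscrete hQ (hfin Q hQ.1).1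
    exact ⟨R, hR.1, hne R hR.1, subset_sUnion_of_mem ⟨hR, hQR⟩, hμ ▸ hcontrol R hR⟩
  calc μ {x | r < hlMax Qx (μ ·) F x} ≤ μ (⋃₀ (branch 𝒞 '' 𝒞)) :=
        measure_mono ((setOf_lt_hlMax_subset Qx _ F r hmem).trans (sUnion_subset_sUnion_branch 𝒞))
    _ ≤ r⁻¹ * hlNorm 𝒬 F :=
        μ.measure_sUnion_le_mul_hlNorm F _ ((hD2.mono h𝒞).image _)
          (hlam.pairwiseDisjoint_branch fun Q hQ ↦ hne Q hQ.1) hbranch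

theorem dyadic_hl_constant_le_one {X : Type*}
    (Qx : X → Set (Set X)) (μ : MeasureTheory.OuterMeasure X)
    (hne : ∀ x, (Qx x).Nonempty) (hmem : ∀ x, ∀ Q ∈ Qx x, x ∈ Q)
    (hfin : ∀ Q ∈ ⋃ x, Qx x, 0 < μ Q ∧ μ Q < ∞)
    (hD1 : ∀ Q ∈ ⋃ x, Qx x, μ.IsCaratheodory Q)
    (hD2 : (⋃ x, Qx x).Countable)
    (hD3 : ∀ Q ∈ ⋃ x, Qx x, ∀ Q' ∈ ⋃ x, Qx x,
      Q ∩ Q' = Q ∨ Q ∩ Q' = Q' ∨ Q ∩ Q' = ∅)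
    (hD4 : ∀ Q ∈ ⋃ x, Qx x, ∀ Q' ∈ ⋃ x, Qx x, Q ⊂ Q' → μ Q ≤ μ Q')
    (hD5 : ∀ ε : ℝ≥0∞, 0 < ε →
      ∀ a ∈ Set.Ioo (0 : ℝ≥0∞) ⊤,
        a ∉ closure ({v | ∃ Q ∈ ⋃ x, Qx x, ε < μ Q ∧ μ Q = v} \ {a})) :
    ∀ F : Set X → ℝ≥0∞, ∀ r : ℝ≥0∞, 0 < r → r ≠ ⊤ →
      μ {x | r < hlMax Qx (μ ·) F x} ≤ r⁻¹ * hlNorm (⋃ x, Qx x) F :=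
  dyadic_hl_constant_le_one_general Qx μ hmem hfin hD1 hD2 hD3 hD5
end
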